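/- Let the data matrices satisfy H̃_x = A H_x + Σⱼ Bⱼ H_{u_j}. Suppose Γ⁰ satisfies H_x Γ⁰ = I and H_{u_j} Γ⁰ = −Kⱼ⁰ for all j, and Γ̄ᵢ satisfies H_x Γ̄ᵢ = I, H_{u_i} Γ̄ᵢ = 0, and H_{u_j} Γ̄ᵢ = −Kⱼ⁰ for all j ≠ i. If moreover Kᵢ⁰ = Rᵢᵢ^{−1} Bᵢᵀ 𝓟 with 𝓟 invertible, then H̃_x (Γ̄ᵢ − Γ⁰) 𝓟^{−1} = Bᵢ Rᵢᵢ^{−1} Bᵢᵀ. -/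
import Mathlib


open Matrix

/-- equations (26)-(27): data-based computation of
`Sᵢ = Bᵢ Rᵢᵢ⁻¹ Bᵢᵀ`. -/
theorem data_based_S_matrix
    (n N η : ℕ) (m : Fin N → ℕ)
    (A : Matrix (Fin n) (Fin n) ℝ)
    (B : ∀ j : Fin N, Matrix (Fin n) (Fin (m j)) ℝ)
    (Hx Htx : Matrix (Fin n) (Fin η) ℝ)
    (Hu : ∀ j : Fin N, Matrix (Fin (m j)) (Fin η) ℝ)
    (K0 : ∀ j : Fin N, Matrix (Fin (m j)) (Fin n) ℝ)
    (i : Fin N) (Γ0 Γbar : Matrix (Fin η) (Fin n) ℝ)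
    (R : Matrix (Fin (m i)) (Fin (m i)) ℝ) (hR : IsUnit R)
    (P : Matrix (Fin n) (Fin n) ℝ) (hP : IsUnit P)
    (hdata : Htx = A * Hx + ∑ j, B j * Hu j)
    (hΓ0x : Hx * Γ0 = 1)
    (hΓ0u : ∀ j, Hu j * Γ0 = -(K0 j))
    (hΓbx : Hx * Γbar = 1)
    (hΓbi : Hu i * Γbar = 0)
    (hΓbj : ∀ j, j ≠ i → Hu j * Γbar = -(K0 j))
    (hK0i : K0 i = R⁻¹ * (B i)ᵀ * P) :
    Htx * (Γbar - Γ0) * P⁻¹ = B i * R⁻¹ * (B i)ᵀ := by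
  have key : Htx * (Γbar - Γ0) = B i * R⁻¹ * (B i)ᵀ * P := by
    subst hdata
    have hsum : ∀ j : Fin N, (B j * Hu j) * (Γbar - Γ0)
        = if j = i then B i * R⁻¹ * (B i)ᵀ * P else 0 := by
      intro j
      by_cases hj : j = i
      · subst hj
        rw [Matrix.mul_sub, Matrix.mul_assoc, Matrix.mul_assoc, hΓbi, hΓ0u, Matrix.mul_zero,
          zero_sub, ← Matrix.mul_neg, neg_neg, hK0i, if_pos rfl]
        simp [Matrix.mul_assoc]
      · rw [Matrix.mul_sub, Matrix.mul_assoc, Matrix.mul_assoc, hΓbj j hj, hΓ0u, sub_self, if_neg hj]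
    rw [Matrix.add_mul, Matrix.mul_sub, Matrix.mul_assoc, Matrix.mul_assoc, hΓ0x, hΓbx,
      sub_self, zero_add, Matrix.sum_mul]
    simp [hsum]
  rw [key, Matrix.mul_assoc, Matrix.mul_nonsing_inv _ (Matrix.isUnit_iff_isUnit_det P |>.mp hP),
    Matrix.mul_one]
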